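/- arXiv:1007.3662 — 5 statements merged into one kernel-verified Lean document; each statement's English description precedes it below -/
import Mathlib

section
/- Let X be a Binomial(N, p) random variable with 0 < p < 1, and let n ≥ 1. Then for any function g : {0,1,...,N} → ℝ, Var g(X) ≥ ∑_{k=1}^{min{n,N}} [p^k / (k! (N)_k (1−p)^k)] · (E[(N−X)_k Δ^k[g(X)]])², where (a)_k = a(a−1)⋯(a−k+1) is the falling factorial; equality holds when n ≥ N. -/
/-- Forward difference operator on functions `ℕ → ℝ`. -/
noncomputable def fdiffN (g : ℕ → ℝ) : ℕ → ℝ := fun x => g (x + 1) - g x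

/-- Falling factorial `(a)ₖ = a(a−1)⋯(a−k+1)` with real argument. -/
noncomputable def fallFact (a : ℝ) (k : ℕ) : ℝ := ∏ i ∈ Finset.range k, (a - i)

/-!
Write `E_N` for the expectation under `Binomial(N, p)` and `q = 1 - p`. Then
`E_{N+1} f = q E_N f + p E_N f(· + 1)` and `q a² + p b² = (q a + p b)² + p q (b - a)²`, so by
induction on `N` one gets the exact expansion `E_N[f²] = ∑_{k ≤ N} C(N,k) (p q)ᵏ (E_{N-k} Δᵏ f)²`.
Applied to `g - E g` it writes `Var g(X)` as a sum of nonnegative terms over `k = 1, …, N`, and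
since `E_N[(N - X)ₖ h(X)] = (N)ₖ qᵏ E_{N-k} h`, the `k`-th term is the `k`-th term of the bound.
-/

open Finset

theorem Nat.choose_mul_choose_sub_comm (n a b : ℕ) :
    n.choose a * (n - a).choose b = n.choose b * (n - b).choose a := by
  have ha := Nat.choose_mul (n := n) (Nat.le_add_right a b)
  have hb := Nat.choose_mul (n := n) (Nat.le_add_left b a)
  rw [Nat.add_sub_cancel_left] at ha
  rw [Nat.add_sub_cancel, ← Nat.choose_symm_add] at hb
  rw [← ha, ← hb]

theorem Nat.choose_mul_descFactorial_sub (n a b : ℕ) :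
    n.choose a * (n - a).descFactorial b = n.descFactorial b * (n - b).choose a := by
  rw [Nat.descFactorial_eq_factorial_mul_choose, Nat.descFactorial_eq_factorial_mul_choose,
    mul_left_comm, Nat.choose_mul_choose_sub_comm, mul_assoc]

theorem fallFact_natCast (m k : ℕ) : fallFact m k = m.descFactorial k := by
  induction k with
  | zero => simp [fallFact]
  | succ k ih =>
    rw [fallFact, prod_range_succ, ← fallFact, ih, Nat.descFactorial_succ, Nat.cast_mul, mul_comm]
    rcases le_or_gt k m with hkm | hmk
    · rw [Nat.cast_sub hkm]
    · simp [Nat.descFactorial_eq_zero_iff_lt.mpr hmk]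

theorem iterate_fdiffN_comp_succ (k : ℕ) (g : ℕ → ℝ) :
    fdiffN^[k] (fun x => g (x + 1)) = fun x => fdiffN^[k] g (x + 1) :=
  (Function.Commute.iterate_left (g := fun (f : ℕ → ℝ) x => f (x + 1)) (fun _ => rfl) k) g

theorem iterate_fdiffN_sub_const {k : ℕ} (hk : k ≠ 0) (g : ℕ → ℝ) (c : ℝ) :
    fdiffN^[k] (fun x => g x - c) = fdiffN^[k] g := by
  obtain ⟨j, rfl⟩ := Nat.exists_eq_succ_of_ne_zero hk
  rw [Function.iterate_succ_apply, Function.iterate_succ_apply]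
  congr 1
  funext x
  exact sub_sub_sub_cancel_right _ _ _

noncomputable def binomExpect (p : ℝ) (N : ℕ) (f : ℕ → ℝ) : ℝ :=
  ∑ x ∈ range (N + 1), (N.choose x : ℝ) * p ^ x * (1 - p) ^ (N - x) * f x

section binomExpect

variable {p : ℝ}

theorem binomExpect_sub (N : ℕ) (f g : ℕ → ℝ) :
    binomExpect p N (fun x => f x - g x) = binomExpect p N f - binomExpect p N g := by
  simp only [binomExpect, mul_sub, sum_sub_distrib]

theorem binomExpect_fdiffN (N : ℕ) (f : ℕ → ℝ) :
    binomExpect p N (fdiffN f) = binomExpect p N (fun x => f (x + 1)) - binomExpect p N f :=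
  binomExpect_sub N _ f

theorem binomExpect_const (N : ℕ) (c : ℝ) : binomExpect p N (fun _ => c) = c :=
  calc binomExpect p N (fun _ => c) = (p + (1 - p)) ^ N * c := by
        rw [binomExpect, add_pow, sum_mul]
        exact sum_congr rfl fun _ _ => by ring
    _ = c := by rw [add_sub_cancel, one_pow, one_mul]

theorem binomExpect_succ (N : ℕ) (f : ℕ → ℝ) :
    binomExpect p (N + 1) f =
      (1 - p) * binomExpect p N f + p * binomExpect p N (fun x => f (x + 1)) := by
  have h := sum_choose_succ_mul (fun i j => p ^ i * (1 - p) ^ j * f i) N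
  simp only [binomExpect, mul_sum]
  convert h using 1
  · exact sum_congr rfl fun x _ => by ring
  congr 1
  · refine sum_congr rfl fun x hx => ?_
    rw [Nat.sub_add_comm (Nat.lt_succ_iff.mp (mem_range.mp hx)), pow_succ]
    ring
  · exact sum_congr rfl fun x _ => by ring

theorem binomExpect_sq (N : ℕ) (f : ℕ → ℝ) :
    binomExpect p N (fun x => f x ^ 2) =
      ∑ k ∈ range (N + 1),
        (N.choose k : ℝ) * (p * (1 - p)) ^ k * binomExpect p (N - k) (fdiffN^[k] f) ^ 2 := by
  induction N generalizing f with
  | zero => simp [binomExpect]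
  | succ N ih =>
    have hpascal := sum_choose_succ_mul
      (fun i j => (p * (1 - p)) ^ i * binomExpect p j (fdiffN^[i] f) ^ 2) N
    simp only [← mul_assoc] at hpascal
    rw [binomExpect_succ, ih, ih, mul_sum, mul_sum, ← sum_add_distrib, hpascal, ← sum_add_distrib]
    refine sum_congr rfl fun k hk => ?_
    set a := binomExpect p (N - k) (fdiffN^[k] f)
    set b := binomExpect p (N - k) (fun x => fdiffN^[k] f (x + 1))
    have hshift : binomExpect p (N - k) (fdiffN^[k] fun x => f (x + 1)) = b := by
      rw [iterate_fdiffN_comp_succ]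
    have hmix : binomExpect p (N + 1 - k) (fdiffN^[k] f) = (1 - p) * a + p * b := by
      rw [Nat.sub_add_comm (Nat.lt_succ_iff.mp (mem_range.mp hk)), binomExpect_succ]
    have hdiff : binomExpect p (N - k) (fdiffN^[k + 1] f) = b - a := by
      rw [Function.iterate_succ_apply', binomExpect_fdiffN]
    rw [hshift, hmix, hdiff]
    -- `q a² + p b² = (q a + p b)² + p q (b - a)²` when `p + q = 1`
    ring

theorem binomExpect_sub_mean_sq (N : ℕ) (g : ℕ → ℝ) :
    binomExpect p N (fun x => (g x - binomExpect p N g) ^ 2) =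
      ∑ k ∈ Icc 1 N,
        (N.choose k : ℝ) * (p * (1 - p)) ^ k * binomExpect p (N - k) (fdiffN^[k] g) ^ 2 := by
  have hmean : binomExpect p N (fun x => g x - binomExpect p N g) = 0 := by
    rw [binomExpect_sub, binomExpect_const, sub_self]
  rw [binomExpect_sq, range_eq_Ico, sum_eq_sum_Ico_succ_bot N.succ_pos, Function.iterate_zero,
    id, Nat.sub_zero, hmean, zero_pow two_ne_zero, mul_zero, zero_add]
  refine sum_congr rfl fun k hk => ?_
  rw [iterate_fdiffN_sub_const (Nat.one_le_iff_ne_zero.mp (mem_Ico.mp hk).1)]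

theorem binomExpect_fallFact_mul {N k : ℕ} (hk : k ≤ N) (h : ℕ → ℝ) :
    binomExpect p N (fun x => fallFact ((N : ℝ) - x) k * h x) =
      N.descFactorial k * (1 - p) ^ k * binomExpect p (N - k) h := by
  have hfall : ∀ x ∈ range (N + 1), fallFact ((N : ℝ) - x) k = (N - x).descFactorial k :=
    fun x hx => by rw [← Nat.cast_sub (Nat.lt_succ_iff.mp (mem_range.mp hx)), fallFact_natCast]
  have hsub : range (N - k + 1) ⊆ range (N + 1) := range_subset_range.mpr (by omega)
  rw [binomExpect, binomExpect, mul_sum, ← sum_subset hsub]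
  · refine sum_congr rfl fun x hx => ?_
    have hxk : x ≤ N - k := Nat.lt_succ_iff.mp (mem_range.mp hx)
    have hchoose : (N.choose x : ℝ) * (N - x).descFactorial k =
        N.descFactorial k * (N - k).choose x := by
      exact_mod_cast Nat.choose_mul_descFactorial_sub N x k
    have hpow : (1 - p) ^ (N - x) = (1 - p) ^ (N - k - x) * (1 - p) ^ k := by
      rw [← pow_add, show N - k - x + k = N - x by omega]
    rw [hfall x (hsub hx), hpow]
    linear_combination p ^ x * (1 - p) ^ (N - k - x) * (1 - p) ^ k * h x * hchoose
  · intro x hx hxk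
    rw [hfall x hx, Nat.descFactorial_eq_zero_iff_lt.mpr (by simp only [mem_range] at hx hxk; omega)]
    simp

theorem div_mul_sq_binomExpect_fallFact_mul (hp : p ≠ 1) {N k : ℕ} (hk : k ≤ N)
    (h : ℕ → ℝ) :
    p ^ k / ((k.factorial : ℝ) * fallFact N k * (1 - p) ^ k) *
        binomExpect p N (fun x => fallFact ((N : ℝ) - x) k * h x) ^ 2 =
      N.choose k * (p * (1 - p)) ^ k * binomExpect p (N - k) h ^ 2 := by
  have hq : (1 - p) ^ k ≠ 0 := pow_ne_zero k (sub_ne_zero.mpr hp.symm)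
  have hchoose : (N.choose k : ℝ) ≠ 0 := Nat.cast_ne_zero.mpr (Nat.choose_pos hk).ne'
  rw [binomExpect_fallFact_mul hk, fallFact_natCast, Nat.descFactorial_eq_factorial_mul_choose,
    mul_pow p (1 - p) k]
  push_cast
  field_simp

end binomExpect

theorem binomial_lower_variance_bound_general
    (N : ℕ) (p : ℝ) (hp0 : 0 < p) (hp1 : p < 1) (n : ℕ) (g : ℕ → ℝ) :
    (let pmf : ℕ → ℝ := fun x => (N.choose x : ℝ) * p ^ x * (1 - p) ^ (N - x);
     let E : (ℕ → ℝ) → ℝ := fun f => ∑ x ∈ Finset.range (N + 1), pmf x * f x;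
     let Var : ℝ := E (fun x => (g x - E g) ^ 2);
     let S : ℝ := ∑ k ∈ Finset.Icc 1 (min n N),
        p ^ k / ((Nat.factorial k : ℝ) * fallFact (N : ℝ) k * (1 - p) ^ k) *
          (E (fun x => fallFact ((N : ℝ) - x) k * fdiffN^[k] g x)) ^ 2;
     S ≤ Var ∧ (N ≤ n → Var = S)) := by
  intro pmf E Var S
  have hVar : Var = ∑ k ∈ Icc 1 N,
      (N.choose k : ℝ) * (p * (1 - p)) ^ k * binomExpect p (N - k) (fdiffN^[k] g) ^ 2 :=
    binomExpect_sub_mean_sq N g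
  have hS : S = ∑ k ∈ Icc 1 (min n N),
      (N.choose k : ℝ) * (p * (1 - p)) ^ k * binomExpect p (N - k) (fdiffN^[k] g) ^ 2 :=
    sum_congr rfl fun k hk => div_mul_sq_binomExpect_fallFact_mul hp1.ne
      ((mem_Icc.mp hk).2.trans (min_le_right n N)) _
  rw [hVar, hS]
  refine ⟨sum_le_sum_of_subset_of_nonneg (Icc_subset_Icc_right (min_le_right n N))
    fun k _ _ => by positivity, fun hNn => by rw [min_eq_right hNn]⟩

/-- **Lower variance bound for the binomial distribution (Example 4.2).**
For `X ~ Binomial(N, p)` with `0 < p < 1` and any `g`,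
`Var g(X) ≥ ∑_{k=1}^{min(n,N)} pᵏ/(k! (N)ₖ (1−p)ᵏ) (E[(N−X)ₖ Δᵏ g(X)])²`,
with equality when `n ≥ N`. -/
theorem binomial_lower_variance_bound
    (N : ℕ) (p : ℝ) (hp0 : 0 < p) (hp1 : p < 1) (n : ℕ) (hn : 1 ≤ n) (g : ℕ → ℝ) :
    (let pmf : ℕ → ℝ := fun x => (N.choose x : ℝ) * p ^ x * (1 - p) ^ (N - x);
     let E : (ℕ → ℝ) → ℝ := fun f => ∑ x ∈ Finset.range (N + 1), pmf x * f x;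
     let Var : ℝ := E (fun x => (g x - E g) ^ 2);
     let S : ℝ := ∑ k ∈ Finset.Icc 1 (min n N),
        p ^ k / ((Nat.factorial k : ℝ) * fallFact (N : ℝ) k * (1 - p) ^ k) *
          (E (fun x => fallFact ((N : ℝ) - x) k * fdiffN^[k] g x)) ^ 2;
     S ≤ Var ∧ (N ≤ n → Var = S)) :=
  binomial_lower_variance_bound_general N p hp0 hp1 n g
end

section
/- Let X be uniformly distributed on {1, 2, ..., N} and let n ≥ 1. Then for any function g : {1,...,N} → ℝ, Var g(X) ≥ N ∑_{k=1}^{min{n,N−1}} [(2k+1)(N−k−1)! / ((k!)² (N+k)!)] · (E[[X]_k (N−X)_k Δ^k[g(X)]])², with equality when n ≥ N−1. -/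
/-- Rising factorial `[a]ₖ = a(a+1)⋯(a+k−1)` with real argument. -/
noncomputable def risFact (a : ℝ) (k : ℕ) : ℝ := ∏ i ∈ Finset.range k, (a + i)

/-!
The weight `w_k(x) = [x]_k (N - x)_k` vanishes at `0, -1, …, 1 - k` and at `N, …, N - k + 1`, so
`k` summations by parts on `{1, …, N}` turn `∑ₓ w_k(x) Δᵏg(x)` into `∑ₓ Q_k(x) g(x)` with
`Q_k = Δ₋₁ᵏ w_k`, `Δ₋₁f(x) = f(x - 1) - f(x)`: a discrete Rodrigues formula for the discrete
Chebyshev polynomials. Since `Q_l` is, up to sign and shift, `Δˡ` of the degree-`2l` polynomial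
`w_l`, the same identity with `g = Q_l` shows that `Q_0, …, Q_{N-1}` are orthogonal on `{1, …, N}`
with `‖Q_k‖² = (2k)! ∑ₓ w_k(x) = (2k)! (k!)² C(N+k, 2k+1)` (an upper Chu–Vandermonde sum).
Being `N` orthogonal vectors in an `N`-dimensional space they are complete, so Parseval's identity
expands `Var g(X)` over `k = 1, …, N - 1`; truncating at `n` gives the inequality.
-/

open Finset Polynomial fwdDiff Nat

theorem Finset.sum_Icc_one_eq_sum_range {M : Type*} [AddCommMonoid M] (N : ℕ) (f : ℕ → M) :
    ∑ x ∈ Icc 1 N, f x = ∑ i ∈ range N, f (i + 1) := by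
  rw [← Finset.Ico_add_one_right_eq_Icc, Finset.sum_Ico_eq_sum_range, Nat.add_sub_cancel]
  simp only [add_comm 1]

theorem Nat.sum_antidiagonal_add_choose_mul_add_choose (a b n : ℕ) :
    ∑ ij ∈ antidiagonal n, (ij.1 + a).choose a * (ij.2 + b).choose b =
      (n + a + b + 1).choose (a + b + 1) := by
  -- Chu–Vandermonde in `ℤ` at the negative integers `-(a + 1)` and `-(b + 1)`.
  have hneg (c i : ℕ) :
      Ring.choose (-((c : ℤ) + 1)) i = (-1) ^ i * ((i + c).choose c : ℤ) := by
    rw [Ring.choose_neg, show (c : ℤ) + 1 + i - 1 = ((i + c : ℕ) : ℤ) by push_cast; ring,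
      Ring.choose_natCast, Nat.choose_symm_add, Units.smul_def, Int.coe_negOnePow_natCast,
      zsmul_eq_mul, Int.cast_pow, Int.cast_neg, Int.cast_one]
  have h := Ring.add_choose_eq (r := -((a : ℤ) + 1)) (s := -((b : ℤ) + 1)) n (Commute.all _ _)
  rw [show -((a : ℤ) + 1) + -((b : ℤ) + 1) = -(((a + b + 1 : ℕ) : ℤ) + 1) by push_cast; ring,
    hneg, sum_congr rfl fun ij hij => by
      rw [hneg, hneg, mul_mul_mul_comm, ← pow_add, mem_antidiagonal.mp hij], ← mul_sum] at h
  rw [← add_assoc, ← add_assoc] at h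
  exact_mod_cast (mul_right_injective₀ (pow_ne_zero n (by norm_num : (-1 : ℤ) ≠ 0)) h).symm

theorem Nat.sum_Icc_ascFactorial_mul_descFactorial (N k : ℕ) :
    ∑ x ∈ Icc 1 N, x.ascFactorial k * (N - x).descFactorial k =
      k ! ^ 2 * (N + k).choose (2 * k + 1) := by
  rcases le_or_gt N k with hNk | hkN
  · rw [choose_eq_zero_of_lt (by omega), mul_zero]
    exact sum_eq_zero fun x hx => by
      rw [descFactorial_eq_zero_iff_lt.mpr (by simp at hx; omega), mul_zero]
  obtain ⟨n, rfl⟩ : ∃ n, N = n + 1 + k := ⟨N - k - 1, by omega⟩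
  rw [sum_Icc_one_eq_sum_range, sum_range_add, sum_eq_zero (s := range k) fun i hi => by
      rw [descFactorial_eq_zero_iff_lt.mpr (by simp at hi; omega), mul_zero], add_zero]
  have hterm : ∀ i ∈ range (n + 1),
      (i + 1).ascFactorial k * (n + 1 + k - (i + 1)).descFactorial k =
        k ! ^ 2 * ((i + k).choose k * (n - i + k).choose k) := fun i hi => by
    rw [ascFactorial_eq_factorial_mul_choose, descFactorial_eq_factorial_mul_choose,
      show n + 1 + k - (i + 1) = n - i + k by simp at hi; omega]
    ring
  rw [sum_congr rfl hterm, ← mul_sum,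
    ← sum_antidiagonal_eq_sum_range_succ (fun i j => (i + k).choose k * (j + k).choose k),
    sum_antidiagonal_add_choose_mul_add_choose]
  ring_nf

theorem fdiffN_eq_fwdDiff : fdiffN = Δ_[1] := rfl

theorem fwdDiff_iter_comp_natCast {R G : Type*} [AddCommMonoidWithOne R] [AddCommGroup G]
    (f : R → G) (k n : ℕ) : (Δ_[1])^[k] (fun m : ℕ => f m) n = (Δ_[1])^[k] f n := by
  induction k generalizing n with
  | zero => rfl
  | succ k ih => simp only [Function.iterate_succ_apply', fwdDiff, ih, Nat.cast_succ]

theorem fwdDiff_neg_one_iter_apply {R G : Type*} [Ring R] [AddCommGroup G] (f : R → G) (j : ℕ)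
    (x : R) : (Δ_[-1])^[j] f x = (-1 : ℤ) ^ j • (Δ_[1])^[j] f (x - j) := by
  induction j generalizing x with
  | zero => simp
  | succ j ih =>
    rw [Function.iterate_succ_apply', Function.iterate_succ_apply', fwdDiff, fwdDiff, ih, ih,
      pow_succ, mul_neg_one, neg_smul, ← smul_sub, ← smul_neg, neg_sub, ← sub_eq_add_neg,
      Nat.cast_succ, sub_add_eq_sub_sub, sub_add_cancel, sub_right_comm]

theorem fwdDiff_neg_one_iter_eq_zero {R G : Type*} [Ring R] [AddCommGroup G] {f : R → G}
    {j : ℕ} {a : R} (hf : ∀ m ≤ j, f (a - m) = 0) : (Δ_[-1])^[j] f a = 0 := by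
  induction j generalizing a with
  | zero => simpa using hf 0 le_rfl
  | succ j ih =>
    rw [Function.iterate_succ_apply', fwdDiff, ih, ih, sub_zero]
    · intro m hm; simpa using hf m (by omega)
    · intro m hm
      rw [← sub_eq_add_neg, sub_sub, add_comm, ← Nat.cast_add_one]
      exact hf (m + 1) (by omega)

theorem sum_Icc_mul_fwdDiff {R : Type*} [CommRing R] {u : R → R} {N : ℕ} (h0 : u 0 = 0)
    (hN : u N = 0) (h : ℕ → R) :
    ∑ x ∈ Icc 1 N, u x * Δ_[1] h x = ∑ x ∈ Icc 1 N, Δ_[-1] u x * h x := by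
  rw [← sub_eq_zero, ← sum_sub_distrib, sum_Icc_one_eq_sum_range]
  have telescope := sum_range_sub (fun i : ℕ => u i * h (i + 1)) N
  simp only [h0, hN, Nat.cast_zero, zero_mul, sub_zero] at telescope
  rw [← telescope]
  refine sum_congr rfl fun i _ => ?_
  simp only [fwdDiff, Nat.cast_add_one, add_neg_cancel_right]
  ring

theorem sum_Icc_mul_fwdDiff_iter {R : Type*} [CommRing R] {u : R → R} {N k : ℕ}
    (h0 : ∀ m < k, u (-m) = 0) (hN : ∀ m < k, u (N - m) = 0) (h : ℕ → R) :
    ∑ x ∈ Icc 1 N, u x * (Δ_[1])^[k] h x = ∑ x ∈ Icc 1 N, (Δ_[-1])^[k] u x * h x := by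
  induction k generalizing h with
  | zero => simp
  | succ k ih =>
    rw [Function.iterate_succ_apply, ih (fun m hm => h0 m (by omega))
      (fun m hm => hN m (by omega)), sum_Icc_mul_fwdDiff, Function.iterate_succ_apply']
    · exact fwdDiff_neg_one_iter_eq_zero fun m hm => by rw [zero_sub]; exact h0 m (by omega)
    · exact fwdDiff_neg_one_iter_eq_zero fun m hm => hN m (by omega)

open Matrix in
theorem sum_inv_mul_sq_eq_sum_sq_of_orthogonal {ι K : Type*} [Fintype ι] [DecidableEq ι]
    [Field K] {v : ι → ι → K} {c : ι → K} (hc : ∀ k, c k ≠ 0)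
    (horth : ∀ k l, ∑ x, v k x * v l x = if k = l then c k else 0) (f : ι → K) :
    ∑ k, (c k)⁻¹ * (∑ x, v k x * f x) ^ 2 = ∑ x, f x ^ 2 := by
  set A : Matrix ι ι K := Matrix.of v
  set B : Matrix ι ι K := diagonal c⁻¹ * A
  have hAAt : A * Aᵀ = diagonal c := by
    ext k l
    simp only [mul_apply, transpose_apply, A, of_apply, horth, diagonal_apply]
  have hBAt : B * Aᵀ = 1 := by
    rw [Matrix.mul_assoc, hAAt, diagonal_mul_diagonal, ← diagonal_one]
    congr 1
    funext k
    exact inv_mul_cancel₀ (hc k)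
  -- `A` is square, so its right inverse is also a left inverse: the family is complete.
  have hAtB : Aᵀ * B = 1 := mul_eq_one_comm.mp hBAt
  calc ∑ k, (c k)⁻¹ * (∑ x, v k x * f x) ^ 2 = (A *ᵥ f) ⬝ᵥ (B *ᵥ f) := by
        rw [← mulVec_mulVec, dotProduct]
        refine sum_congr rfl fun k _ => ?_
        rw [mulVec_diagonal, Pi.inv_apply]
        simp only [mulVec, dotProduct, A, of_apply]
        ring
    _ = f ⬝ᵥ ((Aᵀ * B) *ᵥ f) := by
        rw [← vecMul_transpose, ← dotProduct_mulVec, mulVec_mulVec]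
    _ = ∑ x, f x ^ 2 := by
        rw [hAtB, one_mulVec, dotProduct]
        simp only [sq]

noncomputable def chebyshevWeight (N k : ℕ) : ℝ[X] :=
  ascPochhammer ℝ k * (descPochhammer ℝ k).comp (C (N : ℝ) - X)

theorem risFact_eq_eval_ascPochhammer (a : ℝ) (k : ℕ) :
    risFact a k = (ascPochhammer ℝ k).eval a := by
  induction k with
  | zero => simp [risFact]
  | succ k ih => rw [risFact, prod_range_succ, ← risFact, ih, ascPochhammer_succ_eval]

theorem chebyshevWeight_eval (N k : ℕ) (x : ℝ) :
    (chebyshevWeight N k).eval x = risFact x k * fallFact (N - x) k := by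
  rw [chebyshevWeight, eval_mul, eval_comp, risFact_eq_eval_ascPochhammer, fallFact,
    descPochhammer_eval_eq_prod_range]
  simp

theorem chebyshevWeight_eval_natCast {N x : ℕ} (hx : x ≤ N) (k : ℕ) :
    (chebyshevWeight N k).eval (x : ℝ) = (x.ascFactorial k * (N - x).descFactorial k : ℕ) := by
  rw [chebyshevWeight, eval_mul, eval_comp, Nat.cast_mul, cast_ascFactorial,
    ← descPochhammer_eval_eq_descFactorial, Nat.cast_sub hx]
  simp

theorem chebyshevWeight_eval_neg {N k m : ℕ} (hm : m < k) :
    (chebyshevWeight N k).eval (-(m : ℝ)) = 0 := by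
  rw [chebyshevWeight, eval_mul, ascPochhammer_eval_neg_coe_nat_of_lt hm, zero_mul]

theorem chebyshevWeight_eval_sub {N k m : ℕ} (hm : m < k) :
    (chebyshevWeight N k).eval ((N : ℝ) - m) = 0 := by
  rw [chebyshevWeight, eval_mul, eval_comp]
  simp [descPochhammer_eval_coe_nat_of_lt hm]

theorem natDegree_and_leadingCoeff_chebyshevWeight (N k : ℕ) :
    (chebyshevWeight N k).natDegree = 2 * k ∧ (chebyshevWeight N k).leadingCoeff = (-1) ^ k := by
  have hlin : C (N : ℝ) - X = -(X - C (N : ℝ)) := by ring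
  have hdeg : (C (N : ℝ) - X).natDegree = 1 := by rw [hlin, natDegree_neg, natDegree_X_sub_C]
  have hlc : (C (N : ℝ) - X).leadingCoeff = -1 := by
    rw [hlin, leadingCoeff_neg, leadingCoeff_X_sub_C]
  have hcomp_lc : ((descPochhammer ℝ k).comp (C (N : ℝ) - X)).leadingCoeff = (-1) ^ k := by
    rw [leadingCoeff_comp (by rw [hdeg]; norm_num), (monic_descPochhammer ℝ k).leadingCoeff, hlc,
      descPochhammer_natDegree, one_mul]
  have hcomp_ne : (descPochhammer ℝ k).comp (C (N : ℝ) - X) ≠ 0 := fun h => by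
    rw [h, leadingCoeff_zero] at hcomp_lc
    exact pow_ne_zero k (neg_ne_zero.mpr one_ne_zero) hcomp_lc.symm
  refine ⟨?_, ?_⟩
  · rw [chebyshevWeight, natDegree_mul (monic_ascPochhammer ℝ k).ne_zero hcomp_ne, natDegree_comp,
      hdeg, ascPochhammer_natDegree, descPochhammer_natDegree]
    ring
  · rw [chebyshevWeight, leadingCoeff_mul, hcomp_lc, (monic_ascPochhammer ℝ k).leadingCoeff,
      one_mul]

theorem sum_chebyshevWeight (N k : ℕ) :
    ∑ x ∈ Icc 1 N, (chebyshevWeight N k).eval (x : ℝ) =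
      (k ! : ℝ) ^ 2 * (N + k).choose (2 * k + 1) := by
  rw [sum_congr rfl fun x hx => chebyshevWeight_eval_natCast (mem_Icc.mp hx).2 k]
  exact_mod_cast sum_Icc_ascFactorial_mul_descFactorial N k

noncomputable def discreteChebyshev (N k : ℕ) : ℝ → ℝ :=
  (Δ_[-1])^[k] (chebyshevWeight N k).eval

noncomputable def discreteChebyshevNormSq (N k : ℕ) : ℝ :=
  (2 * k)! * ((k ! : ℝ) ^ 2 * (N + k).choose (2 * k + 1))

theorem discreteChebyshev_zero (N : ℕ) : discreteChebyshev N 0 = 1 := by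
  funext x
  simp [discreteChebyshev, chebyshevWeight]

theorem sum_discreteChebyshev_mul (N k : ℕ) (h : ℕ → ℝ) :
    ∑ x ∈ Icc 1 N, discreteChebyshev N k x * h x =
      ∑ x ∈ Icc 1 N, (chebyshevWeight N k).eval (x : ℝ) * (Δ_[1])^[k] h x :=
  (sum_Icc_mul_fwdDiff_iter (fun _ => chebyshevWeight_eval_neg)
    (fun _ => chebyshevWeight_eval_sub) h).symm

theorem fwdDiff_iter_discreteChebyshev (N k j : ℕ) (x : ℝ) :
    (Δ_[1])^[j] (discreteChebyshev N k) x =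
      (-1) ^ k * (Δ_[1])^[j + k] (chebyshevWeight N k).eval (x - k) := by
  have hQ : discreteChebyshev N k =
      (-1 : ℤ) ^ k • fun y => (Δ_[1])^[k] (chebyshevWeight N k).eval (y + -k) := by
    funext y
    rw [discreteChebyshev, fwdDiff_neg_one_iter_apply, Pi.smul_apply, sub_eq_add_neg]
  rw [hQ, fwdDiff_iter_const_smul, Pi.smul_apply, fwdDiff_iter_comp_add,
    Function.iterate_add_apply, sub_eq_add_neg, zsmul_eq_mul, Int.cast_pow, Int.cast_neg,
    Int.cast_one]

theorem fwdDiff_iter_discreteChebyshev_of_lt {N k l : ℕ} (hlk : l < k) :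
    (Δ_[1])^[k] (discreteChebyshev N l) = 0 := by
  funext x
  rw [fwdDiff_iter_discreteChebyshev, Polynomial.fwdDiff_iter_eq_zero_of_degree_lt (by
    rw [(natDegree_and_leadingCoeff_chebyshevWeight N l).1]; omega)]
  simp

theorem fwdDiff_iter_discreteChebyshev_self (N k : ℕ) :
    (Δ_[1])^[k] (discreteChebyshev N k) = fun _ => ((2 * k)! : ℝ) := by
  funext x
  obtain ⟨hdeg, hlc⟩ := natDegree_and_leadingCoeff_chebyshevWeight N k
  rw [fwdDiff_iter_discreteChebyshev, ← two_mul, ← hdeg, fwdDiff_iter_degree_eq_factorial, hlc,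
    hdeg]
  simp only [Pi.smul_apply, Pi.natCast_apply, smul_eq_mul, ← mul_assoc, ← pow_add, ← two_mul,
    pow_mul, neg_one_sq, one_pow, one_mul]

theorem sum_discreteChebyshev_mul_discreteChebyshev (N k l : ℕ) :
    ∑ x ∈ Icc 1 N, discreteChebyshev N k x * discreteChebyshev N l x =
      if k = l then discreteChebyshevNormSq N k else 0 := by
  wlog hlk : l ≤ k generalizing k l
  · simp_rw [mul_comm (discreteChebyshev N k _)]
    rw [this l k (by omega), if_neg (by omega), if_neg (by omega)]
  simp only [sum_discreteChebyshev_mul, fwdDiff_iter_comp_natCast]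
  rcases hlk.lt_or_eq with hlk | rfl
  · simp [fwdDiff_iter_discreteChebyshev_of_lt hlk, hlk.ne']
  · simp only [fwdDiff_iter_discreteChebyshev_self, if_true, ← sum_mul,
      sum_chebyshevWeight, discreteChebyshevNormSq]
    ring

theorem discreteChebyshevNormSq_pos {N k : ℕ} (hk : k < N) : 0 < discreteChebyshevNormSq N k := by
  have := Nat.choose_pos (show 2 * k + 1 ≤ N + k by omega)
  unfold discreteChebyshevNormSq
  positivity

theorem sum_sq_eq_sum_discreteChebyshev (N : ℕ) (f : ℕ → ℝ) :
    ∑ x ∈ Icc 1 N, f x ^ 2 = ∑ k ∈ range N,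
      (discreteChebyshevNormSq N k)⁻¹ * (∑ x ∈ Icc 1 N, discreteChebyshev N k x * f x) ^ 2 := by
  have hfin (F : ℕ → ℝ) : ∑ x ∈ Icc 1 N, F x = ∑ i : Fin N, F (i + 1) := by
    rw [sum_Icc_one_eq_sum_range, Fin.sum_univ_eq_sum_range (fun i => F (i + 1))]
  simp only [hfin, ← Fin.sum_univ_eq_sum_range]
  refine (sum_inv_mul_sq_eq_sum_sq_of_orthogonal
    (fun k => (discreteChebyshevNormSq_pos k.2).ne') (fun k l => ?_) _).symm
  rw [← hfin (fun x => discreteChebyshev N k x * discreteChebyshev N l x),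
    sum_discreteChebyshev_mul_discreteChebyshev]
  simp only [Fin.val_inj]

theorem sum_sq_eq_sum_discreteChebyshev_of_sum_eq_zero {N : ℕ} {f : ℕ → ℝ}
    (hf : ∑ x ∈ Icc 1 N, f x = 0) :
    ∑ x ∈ Icc 1 N, f x ^ 2 = ∑ k ∈ Icc 1 (N - 1),
      (discreteChebyshevNormSq N k)⁻¹ * (∑ x ∈ Icc 1 N, discreteChebyshev N k x * f x) ^ 2 := by
  rcases N with _ | N
  · simp
  rw [sum_sq_eq_sum_discreteChebyshev, sum_range_succ', Nat.add_sub_cancel,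
    sum_Icc_one_eq_sum_range N]
  simp [discreteChebyshev_zero, hf]

theorem sum_discreteChebyshev_mul_sub_const {N k : ℕ} (hk : k ≠ 0) (g : ℕ → ℝ) (c : ℝ) :
    ∑ x ∈ Icc 1 N, discreteChebyshev N k x * (g x - c) =
      ∑ x ∈ Icc 1 N, discreteChebyshev N k x * g x := by
  have horth := sum_discreteChebyshev_mul_discreteChebyshev N k 0
  simp only [discreteChebyshev_zero, Pi.one_apply, mul_one, if_neg hk] at horth
  simp [mul_sub, sum_sub_distrib, ← sum_mul, horth]

theorem inv_discreteChebyshevNormSq {N k : ℕ} (hk : k < N) : (discreteChebyshevNormSq N k)⁻¹ =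
    (2 * k + 1 : ℝ) * (N - k - 1)! / ((k ! : ℝ) ^ 2 * (N + k)!) := by
  have hfac : (N + k).choose (2 * k + 1) * (2 * k + 1)! * (N - k - 1)! = (N + k)! := by
    rw [← Nat.choose_mul_factorial_mul_factorial (show 2 * k + 1 ≤ N + k by omega)]
    congr 2; omega
  rw [← hfac, discreteChebyshevNormSq, Nat.factorial_succ]
  push_cast
  have : ((N - k - 1)! : ℝ) ≠ 0 := by positivity
  have : ((N + k).choose (2 * k + 1) : ℝ) ≠ 0 := by
    have := Nat.choose_pos (show 2 * k + 1 ≤ N + k by omega); positivity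
  field_simp

theorem sum_sq_sub_eq_sum_chebyshevWeight_mul_fwdDiff_iter {N : ℕ} {g : ℕ → ℝ} {c : ℝ}
    (hc : ∑ x ∈ Icc 1 N, (g x - c) = 0) :
    ∑ x ∈ Icc 1 N, (g x - c) ^ 2 = ∑ k ∈ Icc 1 (N - 1), (discreteChebyshevNormSq N k)⁻¹ *
      (∑ x ∈ Icc 1 N, (chebyshevWeight N k).eval (x : ℝ) * (Δ_[1])^[k] g x) ^ 2 := by
  rw [sum_sq_eq_sum_discreteChebyshev_of_sum_eq_zero hc]
  refine sum_congr rfl fun k hk => ?_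
  rw [sum_discreteChebyshev_mul_sub_const (by simp at hk; omega), sum_discreteChebyshev_mul]

theorem discrete_uniform_lower_variance_bound_general
    (N : ℕ) (hN : 1 ≤ N) (n : ℕ) (g : ℕ → ℝ) :
    (let E : (ℕ → ℝ) → ℝ := fun f => ∑ x ∈ Finset.Icc 1 N, (1 / (N : ℝ)) * f x;
     let Var : ℝ := E (fun x => (g x - E g) ^ 2);
     let S : ℝ := (N : ℝ) * ∑ k ∈ Finset.Icc 1 (min n (N - 1)),
        ((2 * k + 1 : ℝ) * (Nat.factorial (N - k - 1)) /
            (((Nat.factorial k : ℝ)) ^ 2 * (Nat.factorial (N + k)))) *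
          (E (fun x => risFact (x : ℝ) k * fallFact ((N : ℝ) - x) k * fdiffN^[k] g x)) ^ 2;
     S ≤ Var ∧ (N - 1 ≤ n → Var = S)) := by
  intro E Var S
  have hN₀ : (N : ℝ) ≠ 0 := Nat.cast_ne_zero.mpr (by omega)
  have hmean : ∑ x ∈ Icc 1 N, (g x - E g) = 0 := by
    simp only [E, sum_sub_distrib, sum_const, card_Icc, Nat.add_sub_cancel, ← mul_sum,
      nsmul_eq_mul]
    field_simp
    ring
  have hE (k : ℕ) : E (fun x => risFact x k * fallFact (N - x) k * fdiffN^[k] g x) =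
      1 / N * ∑ x ∈ Icc 1 N, (chebyshevWeight N k).eval (x : ℝ) * (Δ_[1])^[k] g x := by
    simp only [E, mul_sum, chebyshevWeight_eval, fdiffN_eq_fwdDiff]
  have hVar : Var = N * ∑ k ∈ Icc 1 (N - 1),
      ((2 * k + 1 : ℝ) * (N - k - 1)! / ((k ! : ℝ) ^ 2 * (N + k)!)) *
        (E (fun x => risFact (x : ℝ) k * fallFact ((N : ℝ) - x) k * fdiffN^[k] g x)) ^ 2 := by
    calc Var = 1 / N * ∑ x ∈ Icc 1 N, (g x - E g) ^ 2 := (mul_sum ..).symm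
      _ = _ := by
        rw [sum_sq_sub_eq_sum_chebyshevWeight_mul_fwdDiff_iter hmean, mul_sum, mul_sum]
        refine sum_congr rfl fun k hk => ?_
        rw [hE, ← inv_discreteChebyshevNormSq (by simp at hk; omega)]
        field_simp
  refine ⟨?_, fun hn => by simp only [hVar, S, min_eq_right hn]⟩
  rw [hVar]
  refine mul_le_mul_of_nonneg_left (sum_le_sum_of_subset_of_nonneg
    (Icc_subset_Icc_right (min_le_right _ _)) fun k _ _ => by positivity) (Nat.cast_nonneg N)

/-- **Lower variance bound for the discrete uniform distribution (Example 4.4).**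
For `X ~ Uniform{1, …, N}` and any `g`,
`Var g(X) ≥ N ∑_{k=1}^{min(n,N−1)} ((2k+1)(N−k−1)! / ((k!)² (N+k)!)) (E[[X]ₖ (N−X)ₖ Δᵏ g(X)])²`,
with equality when `n ≥ N − 1`. -/
theorem discrete_uniform_lower_variance_bound
    (N : ℕ) (hN : 1 ≤ N) (n : ℕ) (hn : 1 ≤ n) (g : ℕ → ℝ) :
    (let E : (ℕ → ℝ) → ℝ := fun f => ∑ x ∈ Finset.Icc 1 N, (1 / (N : ℝ)) * f x;
     let Var : ℝ := E (fun x => (g x - E g) ^ 2);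
     let S : ℝ := (N : ℝ) * ∑ k ∈ Finset.Icc 1 (min n (N - 1)),
        ((2 * k + 1 : ℝ) * (Nat.factorial (N - k - 1)) /
            (((Nat.factorial k : ℝ)) ^ 2 * (Nat.factorial (N + k)))) *
          (E (fun x => risFact (x : ℝ) k * fallFact ((N : ℝ) - x) k * fdiffN^[k] g x)) ^ 2;
     S ≤ Var ∧ (N - 1 ≤ n → Var = S)) :=
  discrete_uniform_lower_variance_bound_general N hN n g
end

section
/- Let X be the sum of ν i.i.d. Geometric(θ) random variables (so X is negative binomial with parameters ν and θ, 0 < θ < 1), and let T_ν(X) = ∑_{j=0}^{X−1} 1/(ν+j) (with T_ν(0) = 0). Then Var T_ν(X) = ∑_{k=1}^∞ (1−θ)^k / (k² C(ν+k−1, k)), where C(n,k) is the binomial coefficient. -/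
/-!
Put `q = 1 - θ`. The weights `C(ν+x-1, x)` are the coefficients of `F = (1 - X)^(-ν)`, and
`E[g(X)]` is `θ^ν` times the value at `q` of `∑ C(ν+x-1, x) g(x) Xˣ`. Since
`(x+1) C(ν+x, x+1) = (ν+x) C(ν+x-1, x)` and `T(x+1) = T(x) + 1/(ν+x)`, the generating functions
of `C(ν+x-1, x) T(x)` and `C(ν+x-1, x) T(x)²` solve linear ODEs `(1 - X) f' = ν f + h`, whose
solutions are unique given `f(0)`. This identifies them with `F E` and `F (E² + R)`, where
`E = -log(1 - X)` and `R = ∑ Xᵏ / (k² C(ν+k-1, k))`. Evaluating at `q`, `E[T] = -log θ` and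
`E[T²] = log² θ + R(q)`, hence `Var T = R(q)`.
-/

open PowerSeries

namespace PowerSeries

section Derivative

variable {K : Type*}

theorem coeff_X_mul_derivative [CommSemiring K] (f : K⟦X⟧) (n : ℕ) :
    coeff n (X * d⁄dX K f) = n * coeff n f := by
  cases n with
  | zero => simp
  | succ n => rw [coeff_succ_X_mul, coeff_derivative, mul_comm]; push_cast; rfl

theorem coeff_one_sub_X_mul_derivative [CommRing K] (f : K⟦X⟧) (n : ℕ) :
    coeff n ((1 - X) * d⁄dX K f) = (n + 1) * coeff (n + 1) f - n * coeff n f := by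
  rw [sub_mul, one_mul, map_sub, coeff_X_mul_derivative, coeff_derivative, mul_comm]

theorem eq_of_one_sub_X_mul_derivative_eq [Field K] [CharZero K] {a : K} {f g h : K⟦X⟧}
    (hf : (1 - X) * d⁄dX K f = C a * f + h) (hg : (1 - X) * d⁄dX K g = C a * g + h)
    (h0 : constantCoeff f = constantCoeff g) : f = g := by
  ext n
  induction n with
  | zero => simpa using h0
  | succ n ih =>
    have hfn := congrArg (coeff n) hf
    have hgn := congrArg (coeff n) hg
    simp only [coeff_one_sub_X_mul_derivative, map_add, coeff_C_mul] at hfn hgn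
    have hn : (n : K) + 1 ≠ 0 := by exact_mod_cast n.succ_ne_zero
    refine mul_left_cancel₀ hn ?_
    linear_combination hfn - hgn + (n + a) * ih

theorem eq_of_X_mul_derivative_add_C_mul_eq [Field K] {a : K} (ha : ∀ n : ℕ, a + n ≠ 0)
    {f g h : K⟦X⟧} (hf : X * d⁄dX K f + C a * f = h) (hg : X * d⁄dX K g + C a * g = h) : f = g := by
  ext n
  have hfn := congrArg (coeff n) hf
  have hgn := congrArg (coeff n) hg
  simp only [coeff_X_mul_derivative, map_add, coeff_C_mul] at hfn hgn
  refine mul_left_cancel₀ (ha n) ?_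
  linear_combination hfn - hgn

end Derivative

section Summation

variable {R : Type*} [NormedRing R]

theorem summable_norm_coeff_mul {φ ψ : R⟦X⟧} (hφ : Summable fun n => ‖coeff n φ‖)
    (hψ : Summable fun n => ‖coeff n ψ‖) : Summable fun n => ‖coeff n (φ * ψ)‖ := by
  simpa only [coeff_mul] using summable_norm_sum_mul_antidiagonal_of_summable_norm hφ hψ

theorem summable_norm_coeff_add {φ ψ : R⟦X⟧} (hφ : Summable fun n => ‖coeff n φ‖)
    (hψ : Summable fun n => ‖coeff n ψ‖) : Summable fun n => ‖coeff n (φ + ψ)‖ :=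
  (hφ.add hψ).of_nonneg_of_le (fun _ => norm_nonneg _) fun n => by
    rw [map_add]
    exact norm_add_le _ _

theorem hasSum_coeff_mul [CompleteSpace R] {φ ψ : R⟦X⟧} (hφ : Summable fun n => ‖coeff n φ‖)
    (hψ : Summable fun n => ‖coeff n ψ‖) :
    HasSum (fun n => coeff n (φ * ψ)) ((∑' n, coeff n φ) * ∑' n, coeff n ψ) := by
  rw [tsum_mul_tsum_eq_tsum_sum_antidiagonal_of_summable_norm hφ hψ]
  simpa only [coeff_mul] using (summable_norm_coeff_mul hφ hψ).of_norm.hasSum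

theorem summable_norm_coeff_rescale {𝕜 : Type*} [NormedField 𝕜] {φ : 𝕜⟦X⟧}
    (hφ : ∀ n, ‖coeff n φ‖ ≤ 1) {q : 𝕜} (hq : ‖q‖ < 1) :
    Summable fun n => ‖coeff n (rescale q φ)‖ := by
  refine (summable_geometric_of_lt_one (norm_nonneg q) hq).of_nonneg_of_le
    (fun n => norm_nonneg _) fun n => ?_
  rw [coeff_rescale, norm_mul, norm_pow]
  exact mul_le_of_le_one_right (by positivity) (hφ n)

end Summation

end PowerSeries

theorem hasSum_mul_sub_sq {ι α : Type*} [CommRing α] [TopologicalSpace α] [IsTopologicalRing α]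
    {p T : ι → α} {μ s : α} (h0 : HasSum p 1)
    (h1 : HasSum (fun i => p i * T i) μ) (h2 : HasSum (fun i => p i * T i ^ 2) s) :
    HasSum (fun i => p i * (T i - μ) ^ 2) (s - μ ^ 2) := by
  have h := (h2.sub (h1.mul_left (2 * μ))).add (h0.mul_left (μ ^ 2))
  rw [show s - 2 * μ * μ + μ ^ 2 * 1 = s - μ ^ 2 by ring] at h
  exact h.congr_fun fun i => by ring

namespace NegBinomial

noncomputable def weight (ν x : ℕ) : ℝ := ((ν + x - 1).choose x : ℝ)

noncomputable def pmf (ν : ℕ) (θ : ℝ) (x : ℕ) : ℝ := weight ν x * θ ^ ν * (1 - θ) ^ x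

noncomputable def umvue (ν x : ℕ) : ℝ := ∑ j ∈ Finset.range x, 1 / ((ν : ℝ) + j)

noncomputable def weightSeries (ν : ℕ) : ℝ⟦X⟧ := mk (weight ν)

-- `-log (1 - X)`: the constant coefficient is `0⁻¹ = 0`.
noncomputable def logSeries : ℝ⟦X⟧ := mk fun k => (k : ℝ)⁻¹

noncomputable def varianceSeries (ν : ℕ) : ℝ⟦X⟧ := mk fun k => ((k : ℝ) ^ 2 * weight ν k)⁻¹

noncomputable def weightDivSeries (ν : ℕ) : ℝ⟦X⟧ := mk fun x => weight ν x / (ν + x)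

noncomputable def meanSeries (ν : ℕ) : ℝ⟦X⟧ := mk fun x => weight ν x * umvue ν x

noncomputable def secondMomentSeries (ν : ℕ) : ℝ⟦X⟧ := mk fun x => weight ν x * umvue ν x ^ 2

variable {ν : ℕ}

@[simp]
theorem weight_zero (ν : ℕ) : weight ν 0 = 1 := by simp [weight]

theorem weight_eq_choose (hν : 0 < ν) (x : ℕ) : weight ν x = (x + (ν - 1)).choose (ν - 1) := by
  rw [weight, show ν + x - 1 = x + (ν - 1) by omega, Nat.choose_symm_add]

theorem weight_pos (hν : 0 < ν) (x : ℕ) : 0 < weight ν x := by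
  rw [weight_eq_choose hν]
  exact_mod_cast Nat.choose_pos (Nat.le_add_left _ _)

theorem succ_mul_weight_succ (hν : 0 < ν) (x : ℕ) :
    (x + 1) * weight ν (x + 1) = (ν + x) * weight ν x := by
  have h := Nat.add_one_mul_choose_eq (ν + x - 1) x
  rw [Nat.sub_add_cancel (by omega)] at h
  rw [weight, weight, show ν + (x + 1) - 1 = ν + x by omega]
  exact_mod_cast (h.trans (mul_comm _ _)).symm

@[simp]
theorem umvue_zero (ν : ℕ) : umvue ν 0 = 0 := by simp [umvue]

theorem umvue_succ (ν x : ℕ) : umvue ν (x + 1) = umvue ν x + 1 / (ν + x) := by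
  simp [umvue, Finset.sum_range_succ]

theorem one_sub_X_mul_derivative_weightSeries (hν : 0 < ν) :
    (1 - X) * d⁄dX ℝ (weightSeries ν) = C (ν : ℝ) * weightSeries ν := by
  ext n
  rw [coeff_one_sub_X_mul_derivative, coeff_C_mul]
  simp only [weightSeries, coeff_mk]
  linear_combination succ_mul_weight_succ hν n

theorem one_sub_X_mul_derivative_logSeries : (1 - X) * d⁄dX ℝ logSeries = 1 := by
  have h : d⁄dX ℝ logSeries = mk 1 := by
    ext n
    rw [coeff_derivative, logSeries, coeff_mk, coeff_mk]
    push_cast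
    exact inv_mul_cancel₀ (by positivity)
  rw [h, mul_comm, mk_one_mul_one_sub_eq_one]

theorem one_sub_X_mul_derivative_meanSeries (hν : 0 < ν) :
    (1 - X) * d⁄dX ℝ (meanSeries ν) = C (ν : ℝ) * meanSeries ν + weightSeries ν := by
  ext n
  rw [coeff_one_sub_X_mul_derivative, map_add, coeff_C_mul]
  simp only [meanSeries, weightSeries, coeff_mk, umvue_succ]
  have hn : (ν : ℝ) + n ≠ 0 := by positivity
  rw [← mul_assoc, succ_mul_weight_succ hν]
  field_simp
  ring

theorem one_sub_X_mul_derivative_secondMomentSeries (hν : 0 < ν) :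
    (1 - X) * d⁄dX ℝ (secondMomentSeries ν) = C (ν : ℝ) * secondMomentSeries ν
      + (2 * meanSeries ν + weightDivSeries ν) := by
  ext n
  rw [coeff_one_sub_X_mul_derivative, map_add, map_add, coeff_C_mul]
  simp only [secondMomentSeries, meanSeries, weightDivSeries, coeff_mk, umvue_succ]
  rw [show (2 : ℝ⟦X⟧) = C 2 from rfl, coeff_C_mul, coeff_mk]
  have hn : (ν : ℝ) + n ≠ 0 := by positivity
  rw [← mul_assoc, succ_mul_weight_succ hν]
  field_simp
  ring

theorem X_mul_derivative_weightDivSeries_add (hν : 0 < ν) :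
    X * d⁄dX ℝ (weightDivSeries ν) + C (ν : ℝ) * weightDivSeries ν = weightSeries ν := by
  ext n
  rw [map_add, coeff_X_mul_derivative, coeff_C_mul]
  simp only [weightSeries, weightDivSeries, coeff_mk]
  have hn : (ν : ℝ) + n ≠ 0 := by positivity
  field_simp
  ring

theorem derivative_varianceSeries (hν : 0 < ν) :
    d⁄dX ℝ (varianceSeries ν) = mk fun k => ((ν + k) * weight ν k)⁻¹ := by
  ext n
  rw [coeff_derivative, varianceSeries, coeff_mk, coeff_mk, ← succ_mul_weight_succ hν]
  have := weight_pos hν (n + 1)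
  push_cast
  field_simp

theorem X_mul_one_sub_X_mul_derivative_derivative_varianceSeries_add (hν : 0 < ν) :
    X * (1 - X) * d⁄dX ℝ (d⁄dX ℝ (varianceSeries ν))
      + (C (ν : ℝ) - X) * d⁄dX ℝ (varianceSeries ν) = 1 := by
  rw [derivative_varianceSeries hν]
  ext n
  rw [mul_assoc, sub_mul, one_mul, mul_sub, sub_mul, map_add, map_sub, map_sub, coeff_C_mul]
  cases n with
  | zero =>
    simp [hν.ne']
  | succ n =>
    simp only [coeff_succ_X_mul, coeff_X_mul_derivative, coeff_derivative, coeff_mk, coeff_one]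
    have := weight_pos hν n
    have := weight_pos hν (n + 1)
    push_cast
    field_simp
    linear_combination -((ν : ℝ) + n + 1) * succ_mul_weight_succ hν n

/- Both sides solve `X y' + ν y = F`; for the left side this follows, after multiplying by the
unit `1 - X`, from the equations for `F` and `R'`. -/
theorem one_sub_X_mul_weightSeries_mul_derivative_varianceSeries (hν : 0 < ν) :
    (1 - X) * weightSeries ν * d⁄dX ℝ (varianceSeries ν) = weightDivSeries ν := by
  refine eq_of_X_mul_derivative_add_C_mul_eq (a := (ν : ℝ)) (fun n => by positivity) ?_
    (X_mul_derivative_weightDivSeries_add hν)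
  refine (isUnit_iff_constantCoeff.2 (by simp) : IsUnit (1 - X : ℝ⟦X⟧)).mul_left_cancel ?_
  simp only [Derivation.leibniz, smul_eq_mul, map_sub, Derivation.map_one_eq_zero, derivative_X]
  linear_combination
    (X * (1 - X) * d⁄dX ℝ (varianceSeries ν)) * one_sub_X_mul_derivative_weightSeries hν
    + ((1 - X) * weightSeries ν) * X_mul_one_sub_X_mul_derivative_derivative_varianceSeries_add hν

theorem meanSeries_eq (hν : 0 < ν) : meanSeries ν = weightSeries ν * logSeries := by
  refine eq_of_one_sub_X_mul_derivative_eq (one_sub_X_mul_derivative_meanSeries hν) ?_ ?_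
  · simp only [Derivation.leibniz, smul_eq_mul]
    linear_combination logSeries * one_sub_X_mul_derivative_weightSeries hν
      + weightSeries ν * one_sub_X_mul_derivative_logSeries
  · simp [meanSeries, logSeries, constantCoeff_mk]

theorem secondMomentSeries_eq (hν : 0 < ν) :
    secondMomentSeries ν = weightSeries ν * (logSeries ^ 2 + varianceSeries ν) := by
  refine eq_of_one_sub_X_mul_derivative_eq (one_sub_X_mul_derivative_secondMomentSeries hν) ?_ ?_
  · simp only [Derivation.leibniz, Derivation.leibniz_pow, smul_eq_mul, map_add]
    rw [meanSeries_eq hν, ← one_sub_X_mul_weightSeries_mul_derivative_varianceSeries hν]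
    linear_combination (logSeries ^ 2 + varianceSeries ν) * one_sub_X_mul_derivative_weightSeries hν
      + 2 * weightSeries ν * logSeries * one_sub_X_mul_derivative_logSeries
  · simp [secondMomentSeries, logSeries, varianceSeries, constantCoeff_mk]

theorem norm_coeff_logSeries_le_one (n : ℕ) : ‖coeff n logSeries‖ ≤ 1 := by
  rw [logSeries, coeff_mk, Real.norm_of_nonneg (by positivity)]
  exact Nat.cast_inv_le_one n

theorem norm_coeff_varianceSeries_le_one (n : ℕ) : ‖coeff n (varianceSeries ν)‖ ≤ 1 := by
  rw [varianceSeries, coeff_mk, weight, Real.norm_of_nonneg (by positivity)]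
  exact_mod_cast Nat.cast_inv_le_one (n ^ 2 * (ν + n - 1).choose n)

theorem summable_norm_coeff_rescale_weightSeries (hν : 0 < ν) {q : ℝ} (hq : ‖q‖ < 1) :
    Summable fun n => ‖coeff n (rescale q (weightSeries ν))‖ := by
  refine (summable_choose_mul_geometric_of_norm_lt_one (ν - 1) (r := ‖q‖) (by simpa)).congr
    fun n => ?_
  rw [coeff_rescale, weightSeries, coeff_mk, weight_eq_choose hν, norm_mul, norm_pow,
    Real.norm_natCast, mul_comm]

theorem tsum_coeff_rescale_weightSeries (hν : 0 < ν) {q : ℝ} (hq : ‖q‖ < 1) :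
    ∑' n, coeff n (rescale q (weightSeries ν)) = ((1 - q) ^ ν)⁻¹ := by
  have h := tsum_choose_mul_geometric_of_norm_lt_one (ν - 1) hq
  rw [Nat.sub_add_cancel hν, one_div] at h
  rw [← h]
  exact tsum_congr fun n => by
    rw [coeff_rescale, weightSeries, coeff_mk, weight_eq_choose hν, mul_comm]

theorem norm_one_sub_lt_one {θ : ℝ} (hθ0 : 0 < θ) (hθ1 : θ < 1) : ‖1 - θ‖ < 1 := by
  rw [Real.norm_eq_abs, abs_lt]
  constructor <;> linarith

theorem hasSum_pow_mul_coeff_rescale_weightSeries (hν : 0 < ν) {θ : ℝ} (hθ0 : 0 < θ)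
    (hθ1 : θ < 1) : HasSum (fun x => θ ^ ν * coeff x (rescale (1 - θ) (weightSeries ν))) 1 := by
  have hq := norm_one_sub_lt_one hθ0 hθ1
  have h := (summable_norm_coeff_rescale_weightSeries hν hq).of_norm.hasSum.mul_left (θ ^ ν)
  rwa [tsum_coeff_rescale_weightSeries hν hq, sub_sub_cancel, mul_inv_cancel₀ (by positivity)] at h

theorem hasSum_pow_mul_coeff_rescale_weightSeries_mul (hν : 0 < ν) {θ : ℝ} (hθ0 : 0 < θ)
    (hθ1 : θ < 1) {φ : ℝ⟦X⟧} (hφ : Summable fun n => ‖coeff n (rescale (1 - θ) φ)‖) :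
    HasSum (fun x => θ ^ ν * coeff x (rescale (1 - θ) (weightSeries ν * φ)))
      (∑' n, coeff n (rescale (1 - θ) φ)) := by
  have hq := norm_one_sub_lt_one hθ0 hθ1
  have h := (hasSum_coeff_mul (summable_norm_coeff_rescale_weightSeries hν hq) hφ).mul_left (θ ^ ν)
  rwa [tsum_coeff_rescale_weightSeries hν hq, sub_sub_cancel, ← mul_assoc,
    mul_inv_cancel₀ (by positivity), one_mul, ← map_mul] at h

theorem hasSum_coeff_rescale_logSeries {q : ℝ} (hq : ‖q‖ < 1) :
    HasSum (fun n => coeff n (rescale q logSeries)) (-Real.log (1 - q)) := by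
  rw [← hasSum_nat_add_iff' 1]
  simpa [logSeries, coeff_rescale, div_eq_mul_inv] using
    Real.hasSum_pow_div_log_of_abs_lt_one (by rwa [← Real.norm_eq_abs])

theorem hasSum_pmf (hν : 0 < ν) {θ : ℝ} (hθ0 : 0 < θ) (hθ1 : θ < 1) : HasSum (pmf ν θ) 1 :=
  (hasSum_pow_mul_coeff_rescale_weightSeries hν hθ0 hθ1).congr_fun fun x => by
    simp only [pmf, coeff_rescale, weightSeries, coeff_mk]
    ring

theorem hasSum_pmf_mul_umvue (hν : 0 < ν) {θ : ℝ} (hθ0 : 0 < θ) (hθ1 : θ < 1) :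
    HasSum (fun x => pmf ν θ x * umvue ν x) (-Real.log θ) := by
  have hq := norm_one_sub_lt_one hθ0 hθ1
  have h := hasSum_pow_mul_coeff_rescale_weightSeries_mul hν hθ0 hθ1
    (summable_norm_coeff_rescale norm_coeff_logSeries_le_one hq)
  rw [(hasSum_coeff_rescale_logSeries hq).tsum_eq, sub_sub_cancel, ← meanSeries_eq hν] at h
  refine h.congr_fun fun x => ?_
  simp only [pmf, coeff_rescale, meanSeries, coeff_mk]
  ring

theorem hasSum_pmf_mul_umvue_sq (hν : 0 < ν) {θ : ℝ} (hθ0 : 0 < θ) (hθ1 : θ < 1) :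
    HasSum (fun x => pmf ν θ x * umvue ν x ^ 2)
      ((-Real.log θ) ^ 2 + ∑' n, coeff n (rescale (1 - θ) (varianceSeries ν))) := by
  have hq := norm_one_sub_lt_one hθ0 hθ1
  have hE := summable_norm_coeff_rescale norm_coeff_logSeries_le_one hq
  have hR := summable_norm_coeff_rescale (norm_coeff_varianceSeries_le_one (ν := ν)) hq
  have hER : HasSum (fun n => coeff n (rescale (1 - θ) (logSeries ^ 2 + varianceSeries ν)))
      ((-Real.log θ) ^ 2 + ∑' n, coeff n (rescale (1 - θ) (varianceSeries ν))) := by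
    have h := (hasSum_coeff_mul hE hE).add hR.of_norm.hasSum
    rw [(hasSum_coeff_rescale_logSeries hq).tsum_eq, sub_sub_cancel, ← sq] at h
    simpa only [map_add, map_mul, sq] using h
  have hER' : Summable fun n =>
      ‖coeff n (rescale (1 - θ) (logSeries ^ 2 + varianceSeries ν))‖ := by
    simpa only [map_add, map_mul, sq] using
      summable_norm_coeff_add (summable_norm_coeff_mul hE hE) hR
  have h := hasSum_pow_mul_coeff_rescale_weightSeries_mul hν hθ0 hθ1 hER'
  rw [hER.tsum_eq, ← secondMomentSeries_eq hν] at h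
  refine h.congr_fun fun x => ?_
  simp only [pmf, coeff_rescale, secondMomentSeries, coeff_mk]
  ring

end NegBinomial

open NegBinomial in
/-- **Variance of the UMVUE of −log θ for the geometric sample (Application 5.1).**
If `X` is negative binomial with parameters `ν ≥ 1` and `0 < θ < 1`
(`p(x) = C(ν+x−1, x) θ^ν (1−θ)^x`) and `T_ν(x) = ∑_{j=0}^{x−1} 1/(ν+j)`, then
`Var T_ν(X) = ∑_{k=1}^∞ (1−θ)ᵏ / (k² C(ν+k−1, k))`. -/
theorem variance_umvue_neg_log_theta
    (ν : ℕ) (hν : 1 ≤ ν) (θ : ℝ) (hθ0 : 0 < θ) (hθ1 : θ < 1) :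
    (let pmf : ℕ → ℝ := fun x => ((ν + x - 1).choose x : ℝ) * θ ^ ν * (1 - θ) ^ x;
     let T : ℕ → ℝ := fun x => ∑ j ∈ Finset.range x, 1 / ((ν : ℝ) + j);
     let m : ℝ := ∑' x : ℕ, pmf x * T x;
     (∑' x : ℕ, pmf x * (T x - m) ^ 2)
        = ∑' k : ℕ, (1 - θ) ^ (k + 1) /
            (((k + 1 : ℕ) : ℝ) ^ 2 * ((ν + k).choose (k + 1) : ℝ))) := by
  intro pmf T m
  have h0 : HasSum pmf 1 := hasSum_pmf hν hθ0 hθ1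
  have h1 : HasSum (fun x => pmf x * T x) (-Real.log θ) := hasSum_pmf_mul_umvue hν hθ0 hθ1
  have h2 : HasSum (fun x => pmf x * T x ^ 2) _ := hasSum_pmf_mul_umvue_sq hν hθ0 hθ1
  have hR := summable_norm_coeff_rescale (norm_coeff_varianceSeries_le_one (ν := ν))
    (norm_one_sub_lt_one hθ0 hθ1)
  rw [show m = -Real.log θ from h1.tsum_eq, (hasSum_mul_sub_sq h0 h1 h2).tsum_eq,
    add_sub_cancel_left, hR.of_norm.tsum_eq_zero_add]
  simp [varianceSeries, weight, Nat.add_succ_sub_one, div_eq_mul_inv]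
end

section
/- Let X be the sum of ν i.i.d. Geometric(θ) random variables. Then E[∑_{j=0}^{X−1} 1/(ν+j)] = −log θ; that is, T_ν(X) = ∑_{j=0}^{X−1} 1/(ν+j) is an unbiased estimator of −log θ. -/
/-!
With `q = 1 - θ`, the negative binomial weights are `θ^ν a_x q^x` where `a_x = C(ν+x-1, x)` are
the coefficients of `(1 - q)^(-ν)`. From `(x+1) a_{x+1} = (ν+x) a_x`, both sides of
`a_x ∑_{j<x} 1/(ν+j) = ∑_{i<x} a_i/(x-i)` satisfy `(x+1) b_{x+1} = (ν+x) b_x + a_x`, so they agree;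
the right side is the `x`-th coefficient of the Cauchy product of `(1 - q)^(-ν)` with
`-log(1-q) = ∑_{m≥1} q^m/m`.
Hence the expectation equals `θ^ν · (1 - q)^(-ν) · (-log(1 - q)) = -log θ`.
-/

open Finset

section Recurrence

variable {K : Type*} [Field K] [CharZero K] {a : ℕ → K} {c : K}

theorem succ_mul_sum_range_div_sub (ha : ∀ j : ℕ, ((j : K) + 1) * a (j + 1) = (c + j) * a j)
    (x : ℕ) :
    ((x : K) + 1) * ∑ i ∈ range (x + 1), a i / ((x : K) + 1 - i)
      = (c + x) * ∑ i ∈ range x, a i / ((x : K) - i) + a x := by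
  have hsplit : ((x : K) + 1) * ∑ i ∈ range (x + 1), a i / ((x : K) + 1 - i)
      = ∑ i ∈ range (x + 1), a i + ∑ i ∈ range (x + 1), (i : K) * (a i / ((x : K) + 1 - i)) := by
    rw [mul_sum, ← sum_add_distrib]
    refine sum_congr rfl fun i hi => ?_
    have hd : (x : K) + 1 - i ≠ 0 := by
      rw [← Nat.cast_succ, ← Nat.cast_sub (mem_range.mp hi).le]
      exact Nat.cast_ne_zero.mpr (by have := mem_range.mp hi; omega)
    field_simp
    ring
  have hshift : ∑ i ∈ range (x + 1), (i : K) * (a i / ((x : K) + 1 - i))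
      = ∑ j ∈ range x, ((c + x) * (a j / ((x : K) - j)) - a j) := by
    rw [sum_range_succ']
    simp only [Nat.cast_zero, zero_mul, add_zero]
    refine sum_congr rfl fun j hj => ?_
    have hd : (x : K) - j ≠ 0 := by
      rw [← Nat.cast_sub (mem_range.mp hj).le]
      exact Nat.cast_ne_zero.mpr (by have := mem_range.mp hj; omega)
    push_cast
    rw [show (x : K) + 1 - (j + 1) = x - j by ring, mul_div_assoc', ha j]
    field_simp
    ring
  rw [hsplit, hshift, sum_sub_distrib, sum_range_succ, ← mul_sum]
  ring

theorem mul_sum_range_inv_add_eq_sum_range_div_sub (hc : ∀ j : ℕ, c + j ≠ 0)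
    (ha : ∀ j : ℕ, ((j : K) + 1) * a (j + 1) = (c + j) * a j) (x : ℕ) :
    a x * ∑ j ∈ range x, 1 / (c + j) = ∑ i ∈ range x, a i / ((x : K) - i) := by
  induction x with
  | zero => simp
  | succ x ih =>
    refine mul_left_cancel₀ (Nat.cast_add_one_ne_zero x) ?_
    calc ((x : K) + 1) * (a (x + 1) * ∑ j ∈ range (x + 1), 1 / (c + j))
        = (c + x) * (a x * ∑ j ∈ range x, 1 / (c + j)) + a x := by
          rw [sum_range_succ, ← mul_assoc, ha x]
          field_simp [hc x]
      _ = ((x : K) + 1) * ∑ i ∈ range (x + 1), a i / (((x + 1 : ℕ) : K) - i) := by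
          rw [ih, Nat.cast_succ, succ_mul_sum_range_div_sub ha]

theorem sum_range_succ_mul_pow_div_eq (hc : ∀ j : ℕ, c + j ≠ 0)
    (ha : ∀ j : ℕ, ((j : K) + 1) * a (j + 1) = (c + j) * a j) (q : K) (x : ℕ) :
    ∑ k ∈ range (x + 1), a k * q ^ k * (q ^ (x - k) / ((x - k : ℕ) : K))
      = a x * q ^ x * ∑ j ∈ range x, 1 / (c + j) := by
  rw [sum_range_succ, Nat.sub_self, Nat.cast_zero, div_zero, mul_zero, add_zero, mul_right_comm,
    mul_sum_range_inv_add_eq_sum_range_div_sub hc ha, sum_mul]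
  refine sum_congr rfl fun k hk => ?_
  rw [Nat.cast_sub (mem_range.mp hk).le, ← pow_mul_pow_sub q (mem_range.mp hk).le]
  ring

end Recurrence

theorem Nat.succ_mul_choose_add_succ (n j : ℕ) :
    (j + 1) * (n + (j + 1)).choose (j + 1) = (n + 1 + j) * (n + j).choose j := by
  rw [← add_assoc, Nat.add_right_comm n 1 j, Nat.add_one_mul_choose_eq, mul_comm]

/-- The `m = 0` term is `q ^ 0 / 0 = 0`. -/
theorem Real.hasSum_pow_div_log {q : ℝ} (hq : |q| < 1) :
    HasSum (fun m : ℕ => q ^ m / m) (-Real.log (1 - q)) := by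
  have h := HasSum.zero_add (f := fun m : ℕ => q ^ m / m) (m := -Real.log (1 - q))
    (by exact_mod_cast Real.hasSum_pow_div_log_of_abs_lt_one hq)
  rwa [Nat.cast_zero, div_zero, zero_add] at h

/-- **Unbiasedness of `T_ν` for −log θ (Application 5.1).**
If `X` is negative binomial with parameters `ν ≥ 1` and `0 < θ < 1`, then
`E[∑_{j=0}^{X−1} 1/(ν+j)] = −log θ`. -/
theorem umvue_neg_log_theta_unbiased
    (ν : ℕ) (hν : 1 ≤ ν) (θ : ℝ) (hθ0 : 0 < θ) (hθ1 : θ < 1) :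
    (∑' x : ℕ, (((ν + x - 1).choose x : ℝ) * θ ^ ν * (1 - θ) ^ x)
        * ∑ j ∈ Finset.range x, 1 / ((ν : ℝ) + j))
      = - Real.log θ := by
  obtain ⟨n, rfl⟩ : ∃ n, ν = n + 1 := ⟨ν - 1, by omega⟩
  set q := 1 - θ with hq_def
  have hq : |q| < 1 := by rw [abs_lt]; constructor <;> linarith
  have hc : ∀ j : ℕ, ((n + 1 : ℕ) : ℝ) + j ≠ 0 := fun j => by positivity
  have ha : ∀ j : ℕ, ((j : ℝ) + 1) * ((n + (j + 1)).choose (j + 1) : ℝ)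
      = (((n + 1 : ℕ) : ℝ) + j) * (n + j).choose j := fun j => by
    exact_mod_cast Nat.succ_mul_choose_add_succ n j
  have hA : HasSum (fun k : ℕ => ((n + k).choose k : ℝ) * q ^ k) (θ ^ (n + 1))⁻¹ := by
    have h := hasSum_choose_mul_geometric_of_norm_lt_one n (r := q) (by rwa [Real.norm_eq_abs])
    rw [hq_def, sub_sub_cancel, one_div] at h
    simpa only [add_comm _ n, Nat.choose_symm_add (a := n)] using h
  have hL := Real.hasSum_pow_div_log hq
  have hprod := hasSum_sum_range_mul_of_summable_norm hA.summable.norm hL.summable.norm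
  rw [hA.tsum_eq, hL.tsum_eq, hq_def, sub_sub_cancel] at hprod
  calc _ = ∑' x : ℕ, θ ^ (n + 1) * ∑ k ∈ range (x + 1),
        ((n + k).choose k : ℝ) * q ^ k * (q ^ (x - k) / ((x - k : ℕ) : ℝ)) := by
        refine tsum_congr fun x => ?_
        rw [sum_range_succ_mul_pow_div_eq hc ha, Nat.add_right_comm n 1 x, Nat.add_sub_cancel]
        ring
    _ = -Real.log θ := by
        rw [(hprod.mul_left _).tsum_eq]
        field_simp
end

section
/- For every positive integer ν, ∑_{k=1}^∞ 1 / (k² C(ν+k−1, k)) = ∑_{k=ν}^∞ 1/k² = π²/6 − ∑_{k=1}^{ν−1} 1/k². -/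
/-!
Write `S ν = ∑_{k ≥ 1} 1/(k² C(ν+k-1,k))`. Pascal-type identities for the binomial coefficients give
`S ν - S (ν+1) = (1/ν) ∑_{k ≥ 1} 1/(k C(ν+k,k))`, and the last series telescopes
(`1/(k C(ν+k,k)) = 1/(ν C(ν+k-1,k-1)) - 1/(ν C(ν+k,k))`) to `1/ν`. Hence `S ν - S (ν+1) = 1/ν²`,
which is also the difference of consecutive tails of `∑ 1/k²`; since `S 1 = ∑_{k ≥ 1} 1/k²`,
induction on `ν` gives the first equality, and `ζ(2) = π²/6` gives the second.
-/

open Filter Finset Topology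

theorem hasSum_sub_succ_of_antitone {f : ℕ → ℝ} {l : ℝ} (hf : Antitone f)
    (hl : Tendsto f atTop (𝓝 l)) : HasSum (fun n => f n - f (n + 1)) (f 0 - l) := by
  rw [hasSum_iff_tendsto_nat_of_nonneg fun n => sub_nonneg.2 (hf n.le_succ)]
  simp only [Finset.sum_range_sub']
  exact tendsto_const_nhds.sub hl

namespace Nat

theorem add_one_le_choose_add {ν : ℕ} (hν : 1 ≤ ν) (n : ℕ) : n + 1 ≤ (ν + n).choose n := by
  calc n + 1 = (1 + n).choose n := by rw [Nat.add_comm 1 n, choose_succ_self_right]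
    _ ≤ (ν + n).choose n := choose_le_choose n (by omega)

theorem choose_add_le_choose_add_succ (ν n : ℕ) : (ν + n).choose n ≤ (ν + (n + 1)).choose (n + 1) := by
  rw [← Nat.add_assoc, choose_succ_succ']
  exact Nat.le_add_right _ _

end Nat

section InvChoose

variable {ν : ℕ}

theorem antitone_one_div_mul_choose_add (hν : 1 ≤ ν) :
    Antitone fun n : ℕ => 1 / ((ν : ℝ) * ((ν + n).choose n : ℝ)) := by
  refine antitone_nat_of_succ_le fun n => ?_
  have hpos : (0 : ℝ) < (ν + n).choose n := by exact_mod_cast Nat.choose_pos (by omega)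
  have hν' : (0 : ℝ) < ν := by exact_mod_cast hν
  gcongr
  exact_mod_cast Nat.choose_add_le_choose_add_succ ν n

theorem tendsto_one_div_mul_choose_add (hν : 1 ≤ ν) :
    Tendsto (fun n : ℕ => 1 / ((ν : ℝ) * ((ν + n).choose n : ℝ))) atTop (𝓝 0) := by
  have hν' : (0 : ℝ) < ν := by exact_mod_cast hν
  have hbound (n : ℕ) : 1 / ((ν : ℝ) * ((ν + n).choose n : ℝ)) ≤ 1 / ν * (1 / ((n : ℝ) + 1)) := by
    rw [div_mul_div_comm, one_mul]
    gcongr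
    exact_mod_cast Nat.add_one_le_choose_add hν n
  refine squeeze_zero (fun n => by positivity) hbound ?_
  simpa using tendsto_one_div_add_atTop_nhds_zero_nat.const_mul (1 / (ν : ℝ))

theorem one_div_mul_choose_eq_sub (hν : 1 ≤ ν) (k : ℕ) :
    1 / (((k + 1 : ℕ) : ℝ) * ((ν + k + 1).choose (k + 1) : ℝ))
      = 1 / ((ν : ℝ) * ((ν + k).choose k : ℝ))
        - 1 / ((ν : ℝ) * ((ν + (k + 1)).choose (k + 1) : ℝ)) := by
  have hC : (0 : ℝ) < (ν + k).choose k := by exact_mod_cast Nat.choose_pos (by omega)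
  have hC' : (0 : ℝ) < (ν + k + 1).choose (k + 1) := by exact_mod_cast Nat.choose_pos (by omega)
  have hν' : (0 : ℝ) < ν := by exact_mod_cast hν
  have pascal : ((ν : ℝ) + k + 1) * (ν + k).choose k = (ν + k + 1).choose (k + 1) * ((k : ℝ) + 1) := by
    exact_mod_cast Nat.add_one_mul_choose_eq (ν + k) k
  rw [← Nat.add_assoc]
  push_cast
  field_simp
  linear_combination pascal

theorem hasSum_one_div_mul_choose (hν : 1 ≤ ν) :
    HasSum (fun k : ℕ => 1 / (((k + 1 : ℕ) : ℝ) * ((ν + k + 1).choose (k + 1) : ℝ))) (1 / ν) := by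
  have h := hasSum_sub_succ_of_antitone (antitone_one_div_mul_choose_add hν)
    (tendsto_one_div_mul_choose_add hν)
  simp only [Nat.add_zero, Nat.choose_zero_right, Nat.cast_one, mul_one, sub_zero] at h
  exact h.congr_fun (one_div_mul_choose_eq_sub hν)

end InvChoose

section SeriesInvSqChoose

variable {ν : ℕ}

theorem summable_one_div_sq_mul_choose (ν : ℕ) :
    Summable fun k : ℕ => 1 / (((k + 1 : ℕ) : ℝ) ^ 2 * ((ν + k).choose (k + 1) : ℝ)) := by
  have hsq : Summable fun k : ℕ => 1 / ((k + 1 : ℕ) : ℝ) ^ 2 :=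
    (summable_nat_add_iff 1).2 (Real.summable_one_div_nat_pow.2 one_lt_two)
  refine hsq.of_nonneg_of_le (fun k => by positivity) fun k => ?_
  rcases Nat.eq_zero_or_pos ((ν + k).choose (k + 1)) with h | h
  · simp only [h, Nat.cast_zero, mul_zero, div_zero]
    positivity
  · rw [one_div_le_one_div (by positivity) (by positivity)]
    exact le_mul_of_one_le_right (by positivity) (by exact_mod_cast h)

theorem one_div_sq_mul_choose_eq_add (hν : 1 ≤ ν) (k : ℕ) :
    1 / (((k + 1 : ℕ) : ℝ) ^ 2 * ((ν + k).choose (k + 1) : ℝ))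
      = 1 / (((k + 1 : ℕ) : ℝ) ^ 2 * ((ν + 1 + k).choose (k + 1) : ℝ))
        + 1 / ν * (1 / (((k + 1 : ℕ) : ℝ) * ((ν + k + 1).choose (k + 1) : ℝ))) := by
  have hC : (0 : ℝ) < (ν + k).choose (k + 1) := by exact_mod_cast Nat.choose_pos (by omega)
  have hC' : (0 : ℝ) < (ν + k + 1).choose (k + 1) := by exact_mod_cast Nat.choose_pos (by omega)
  have hν' : (0 : ℝ) < ν := by exact_mod_cast hν
  have pascal : ((ν + k).choose (k + 1) : ℝ) * ((ν : ℝ) + k + 1) = (ν + k + 1).choose (k + 1) * ν := by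
    have := Nat.choose_mul_succ_eq (ν + k) (k + 1)
    rw [show ν + k + 1 - (k + 1) = ν by omega] at this
    exact_mod_cast this
  rw [Nat.add_right_comm ν 1 k]
  push_cast
  field_simp
  linear_combination -pascal

theorem tsum_one_div_sq_mul_choose_eq_add (hν : 1 ≤ ν) :
    ∑' k : ℕ, 1 / (((k + 1 : ℕ) : ℝ) ^ 2 * ((ν + k).choose (k + 1) : ℝ))
      = ∑' k : ℕ, 1 / (((k + 1 : ℕ) : ℝ) ^ 2 * ((ν + 1 + k).choose (k + 1) : ℝ)) + 1 / (ν : ℝ) ^ 2 := by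
  have h := (summable_one_div_sq_mul_choose (ν + 1)).hasSum.add
    ((hasSum_one_div_mul_choose hν).mul_left (1 / (ν : ℝ)))
  rw [(h.congr_fun (one_div_sq_mul_choose_eq_add hν)).tsum_eq]
  ring

theorem tsum_one_div_nat_add_sq_eq_add (ν : ℕ) :
    ∑' k : ℕ, 1 / (((k + ν : ℕ) : ℝ) ^ 2)
      = 1 / (ν : ℝ) ^ 2 + ∑' k : ℕ, 1 / (((k + (ν + 1) : ℕ) : ℝ) ^ 2) := by
  have hsq : Summable fun k : ℕ => 1 / (((k + ν : ℕ) : ℝ) ^ 2) :=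
    (summable_nat_add_iff ν).2 (Real.summable_one_div_nat_pow.2 one_lt_two)
  rw [hsq.tsum_eq_zero_add]
  simp only [Nat.zero_add, Nat.add_right_comm _ 1 ν, Nat.add_assoc _ ν 1]

theorem tsum_one_div_sq_mul_choose (hν : 1 ≤ ν) :
    ∑' k : ℕ, 1 / (((k + 1 : ℕ) : ℝ) ^ 2 * ((ν + k).choose (k + 1) : ℝ))
      = ∑' k : ℕ, 1 / (((k + ν : ℕ) : ℝ) ^ 2) := by
  induction ν, hν using Nat.le_induction with
  | base => simp [Nat.add_comm 1]
  | succ n hn ih =>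
    have := tsum_one_div_sq_mul_choose_eq_add hn
    rw [ih, tsum_one_div_nat_add_sq_eq_add] at this
    linarith

end SeriesInvSqChoose

theorem tsum_one_div_nat_add_sq (ν : ℕ) :
    ∑' k : ℕ, 1 / (((k + ν : ℕ) : ℝ) ^ 2) = Real.pi ^ 2 / 6 - ∑ i ∈ range ν, 1 / (i : ℝ) ^ 2 := by
  rw [← hasSum_zeta_two.tsum_eq, ← hasSum_zeta_two.summable.sum_add_tsum_nat_add ν]
  ring

theorem sum_range_eq_sum_Icc_one_of_map_zero {M : Type*} [AddCommMonoid M] {f : ℕ → M}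
    (hf : f 0 = 0) (n : ℕ) : ∑ i ∈ range n, f i = ∑ i ∈ Icc 1 (n - 1), f i := by
  refine (sum_subset (fun i hi => ?_) fun i hi hi' => ?_).symm
  · simp only [mem_Icc, mem_range] at hi ⊢; omega
  · obtain rfl : i = 0 := by simp only [mem_Icc, mem_range] at hi hi'; omega
    exact hf

/-- **Closed form for the series `∑ₖ 1/(k² C(ν+k−1,k))` (Application 5.2).**
For every positive integer `ν`,
`∑_{k=1}^∞ 1/(k² C(ν+k−1,k)) = ∑_{k=ν}^∞ 1/k² = π²/6 − ∑_{k=1}^{ν−1} 1/k²`. -/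
theorem series_inv_sq_choose (ν : ℕ) (hν : 1 ≤ ν) :
    (∑' k : ℕ, 1 / (((k + 1 : ℕ) : ℝ) ^ 2 * ((ν + k).choose (k + 1) : ℝ)))
        = ∑' k : ℕ, 1 / (((k + ν : ℕ) : ℝ) ^ 2) ∧
    (∑' k : ℕ, 1 / (((k + ν : ℕ) : ℝ) ^ 2))
        = Real.pi ^ 2 / 6 - ∑ k ∈ Finset.Icc 1 (ν - 1), 1 / ((k : ℝ) ^ 2) := by
  refine ⟨tsum_one_div_sq_mul_choose hν, ?_⟩
  rw [tsum_one_div_nat_add_sq, sum_range_eq_sum_Icc_one_of_map_zero (by simp)]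
end
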